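/- If H is a Left end and G is not a Left end, then G ≥ H fails under misère play: there exists a game X with o⁻(G + X) < o⁻(H + X) or the outcomes incomparable (i.e., it is not the case that o⁻(G+X) ≥ o⁻(H+X) for all X). -/

import Mathlib

/-!
Take `X = { · | (G^L)° }`. In `H + X` Left has no move, so moving first she wins (misère).
In `G + X` she must move to some `G^L + X`, and Right answers with `G^L + (G^L)°`, which Left,
moving first, loses against Right's mirror strategy. Hence `o⁻(H + X) ∈ {L, N}` while
`o⁻(G + X) ∈ {P, R}`, and neither `L` nor `N` lies below `P` or `R`.
-/

universe u

namespace SetTheory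

/-- Pre-game, as in Mathlib of December 2024 (`Mathlib/SetTheory/Game/PGame.lean`), since removed. -/
inductive PGame : Type (u + 1)
  | mk : ∀ α β : Type u, (α → PGame) → (β → PGame) → PGame

namespace PGame

/-- The indexing type for allowable moves by Left. -/
def LeftMoves : PGame → Type u
  | mk l _ _ _ => l

/-- The indexing type for allowable moves by Right. -/
def RightMoves : PGame → Type u
  | mk _ r _ _ => r

/-- The new game after Left makes an allowed move. -/
def moveLeft : ∀ g : PGame, LeftMoves g → PGame
  | mk _l _ L _ => L

/-- The new game after Right makes an allowed move. -/
def moveRight : ∀ g : PGame, RightMoves g → PGame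
  | mk _ _r _ R => R

/-- `IsOption x y` means that `x` is either a left or right option for `y`. -/
inductive IsOption : PGame → PGame → Prop
  | moveLeft {x : PGame} (i : x.LeftMoves) : IsOption (x.moveLeft i) x
  | moveRight {x : PGame} (i : x.RightMoves) : IsOption (x.moveRight i) x

/-- `Subsequent x y` says that `x` can be obtained by playing some nonempty sequence of moves
from `y`. -/
def Subsequent : PGame → PGame → Prop :=
  Relation.TransGen IsOption

/-- The sum of `x = {xL | xR}` and `y = {yL | yR}` is `{xL + y, x + yL | xR + y, x + yR}`. -/
noncomputable instance : Add PGame.{u} :=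
  ⟨fun x y => by
    induction x generalizing y with | mk xl xr _ _ IHxl IHxr => _
    induction y with | mk yl yr yL yR IHyl IHyr => _
    have y := mk yl yr yL yR
    refine ⟨xl ⊕ yl, xr ⊕ yr, Sum.rec ?_ ?_, Sum.rec ?_ ?_⟩
    · exact fun i => IHxl i y
    · exact IHyl
    · exact fun i => IHxr i y
    · exact IHyr⟩

end PGame

end SetTheory

open SetTheory

namespace Misere

/-- Misère winning: `(wins G).1` means Left, moving first on `G`, wins under misère play;
`(wins G).2` means Right, moving first, wins. The player unable to move wins. -/
def wins : PGame → Prop × Prop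
  | ⟨α, β, L, R⟩ =>
    (IsEmpty α ∨ ∃ i, ¬ (wins (L i)).2,
     IsEmpty β ∨ ∃ j, ¬ (wins (R j)).1)

/-- Left wins moving first under misère play. -/
def LeftFirst (G : PGame) : Prop := (wins G).1

/-- Right wins moving first under misère play. -/
def RightFirst (G : PGame) : Prop := (wins G).2

/-- Normal-play winning: `(nwins G).1` means Left moving first wins (player unable to move loses). -/
def nwins : PGame → Prop × Prop
  | ⟨α, β, L, R⟩ =>
    (∃ i, ¬ (nwins (L i)).2,
     ∃ j, ¬ (nwins (R j)).1)

/-- Outcome classes. -/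
inductive Outcome : Type
  | L | R | N | P
  deriving DecidableEq

/-- The partial order on outcomes: L > P > R, L > N > R, with P and N incomparable. -/
instance : LE Outcome := ⟨fun a b => a = b ∨ a = .R ∨ b = .L⟩

open Classical in
/-- The misère outcome of a game. -/
noncomputable def misereOutcome (G : PGame) : Outcome :=
  if (wins G).1 then (if (wins G).2 then .N else .L)
  else (if (wins G).2 then .R else .P)

open Classical in
/-- The normal-play outcome of a game. -/
noncomputable def normalOutcome (G : PGame) : Outcome :=
  if (nwins G).1 then (if (nwins G).2 then .N else .L)
  else (if (nwins G).2 then .R else .P)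

/-- A game is dicot if every subposition has a Left option iff it has a Right option. -/
def Dicot : PGame → Prop
  | ⟨α, β, L, R⟩ => (IsEmpty α ↔ IsEmpty β) ∧ (∀ i, Dicot (L i)) ∧ (∀ j, Dicot (R j))

/-- A dead Left end: a Left end all of whose followers are Left ends. -/
def DeadLeftEnd : PGame → Prop
  | ⟨α, _β, _L, R⟩ => IsEmpty α ∧ ∀ j, DeadLeftEnd (R j)

/-- A dead Right end: a Right end all of whose followers are Right ends. -/
def DeadRightEnd : PGame → Prop
  | ⟨_α, β, L, _R⟩ => IsEmpty β ∧ ∀ i, DeadRightEnd (L i)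

/-- A follower of `G` is any position reachable from `G`, including `G` itself. -/
def Follower (H G : PGame) : Prop := H = G ∨ PGame.Subsequent H G

/-- An end: a position where some player has no move. -/
def IsEnd (G : PGame) : Prop := IsEmpty G.LeftMoves ∨ IsEmpty G.RightMoves

/-- A game is dead-ending if every one of its end followers is a dead end. -/
def DeadEnding (G : PGame) : Prop :=
  ∀ H, Follower H G → IsEnd H → (DeadLeftEnd H ∨ DeadRightEnd H)

end Misere

namespace SetTheory.PGame

instance : Zero PGame.{u} := ⟨mk PEmpty PEmpty PEmpty.elim PEmpty.elim⟩

@[simp] theorem leftMoves_mk {α β : Type u} {L : α → PGame} {R : β → PGame} :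
    (mk α β L R).LeftMoves = α := rfl

@[simp] theorem moveLeft_mk {α β : Type u} {L : α → PGame} {R : β → PGame} (i : α) :
    (mk α β L R).moveLeft i = L i := rfl

end SetTheory.PGame

namespace Misere

open PGame

theorem leftFirst_add_iff (A B : PGame) :
    LeftFirst (A + B) ↔ (IsEmpty A.LeftMoves ∧ IsEmpty B.LeftMoves) ∨
      (∃ i, ¬ RightFirst (A.moveLeft i + B)) ∨ ∃ i, ¬ RightFirst (A + B.moveLeft i) := by
  cases A; cases B
  simp only [LeftFirst, RightFirst, wins, isEmpty_sum, Sum.exists]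
  rfl

theorem rightFirst_add_iff (A B : PGame) :
    RightFirst (A + B) ↔ (IsEmpty A.RightMoves ∧ IsEmpty B.RightMoves) ∨
      (∃ j, ¬ LeftFirst (A.moveRight j + B)) ∨ ∃ j, ¬ LeftFirst (A + B.moveRight j) := by
  cases A; cases B
  simp only [LeftFirst, RightFirst, wins, isEmpty_sum, Sum.exists]
  rfl

theorem rightFirst_add_zero {A : PGame} (hA : IsEmpty A.RightMoves) : RightFirst (A + 0) :=
  (rightFirst_add_iff A 0).2 (Or.inl ⟨hA, inferInstanceAs (IsEmpty PEmpty)⟩)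

theorem leftFirst_add_of_isEmpty_leftMoves {A B : PGame} (hA : IsEmpty A.LeftMoves)
    (hB : IsEmpty B.LeftMoves) : LeftFirst (A + B) :=
  (leftFirst_add_iff A B).2 (Or.inl ⟨hA, hB⟩)

/-- A one-sided variant of Siegel's misère adjoint `K°`: it only has to make `K + adj K` a loss
for Left moving first, so the extra option `0` goes to Left when `K = 0` and never to Right. -/
def adj : PGame → PGame
  | ⟨α, β, L, R⟩ =>
    ⟨β ⊕ PLift (IsEmpty α ∧ IsEmpty β), α,
      Sum.elim (fun j => adj (R j)) (fun _ => 0), fun i => adj (L i)⟩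

-- Right, moving second, answers every move with its mirror image.
theorem not_leftFirst_add_adj (K : PGame) : ¬ LeftFirst (K + adj K) := by
  induction K with
  | mk α β L R ihL ihR =>
    simp only [adj, leftFirst_add_iff, leftMoves_mk, moveLeft_mk, isEmpty_sum, not_or,
      not_and, not_exists, not_not]
    refine ⟨fun hα hβ hnoZero => hnoZero.false ⟨⟨hα, hβ⟩⟩, fun i => ?_, ?_⟩
    · exact (rightFirst_add_iff _ _).2 (Or.inr (Or.inr ⟨i, ihL i⟩))
    · rintro (j | ⟨hα, hβ⟩)
      · exact (rightFirst_add_iff _ _).2 (Or.inr (Or.inl ⟨j, ihR j⟩))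
      · exact rightFirst_add_zero hβ

/-- Siegel's test game `{ · | (G^L)° }`, with `adj` for `°`. -/
def leftEndAdj (G : PGame) : PGame :=
  mk PEmpty G.LeftMoves PEmpty.elim fun i => adj (G.moveLeft i)

theorem leftFirst_add_leftEndAdj {H : PGame} (hH : IsEmpty H.LeftMoves) (G : PGame) :
    LeftFirst (H + leftEndAdj G) :=
  leftFirst_add_of_isEmpty_leftMoves hH (inferInstanceAs (IsEmpty PEmpty))

theorem not_leftFirst_add_leftEndAdj {G : PGame} (hG : Nonempty G.LeftMoves) :
    ¬ LeftFirst (G + leftEndAdj G) := by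
  simp only [leftFirst_add_iff, leftEndAdj, leftMoves_mk, not_or, not_and, not_exists, not_not]
  refine ⟨fun hG' => (not_isEmpty_iff.2 hG hG').elim, fun i => ?_, nofun⟩
  exact (rightFirst_add_iff _ _).2 (Or.inr (Or.inr ⟨i, not_leftFirst_add_adj _⟩))

theorem not_misereOutcome_le_of_leftFirst {A B : PGame} (hA : LeftFirst A) (hB : ¬ LeftFirst B) :
    ¬ misereOutcome A ≤ misereOutcome B := by
  rw [LeftFirst] at hA hB
  unfold misereOutcome
  split_ifs <;> simp [LE.le]

end Misere

open Misere in
/-- Siegel, Lemma 3.5: if `H` is a Left end and `G` is not, then `G ≥ H`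
fails under misère play. -/
theorem not_ge_left_end (G H : PGame)
    (hH : IsEmpty H.LeftMoves) (hG : Nonempty G.LeftMoves) :
    ¬ ∀ X : PGame, misereOutcome (H + X) ≤ misereOutcome (G + X) := fun hge =>
  not_misereOutcome_le_of_leftFirst (leftFirst_add_leftEndAdj hH G)
    (not_leftFirst_add_leftEndAdj hG) (hge (leftEndAdj G))
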